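/- For any graph G, vertex u, and set S of vertices with u ∈ S and u ∉ Odd_G(S): Odd_{G⋆u}(S) = Odd_G(S) Δ (N_G(u) ∩ S), and consequently u ∉ Odd_{G⋆u}(S). -/

import Mathlib

/-!
Local complementation at `u` leaves the neighbourhood of every non-neighbour of `u` unchanged,
and toggles the adjacency of a neighbour `x` of `u` to every vertex of `N(u) \ {x}`. So the parity
of `|S ∩ N(x)|` changes by `|S ∩ N(u) \ {x}| ≡ |S ∩ N(u)| + [x ∈ S]`, which is `[x ∈ S]` when
`u ∉ Odd(S)`. The vertex `u` itself keeps its neighbourhood and `u ∉ N(u)`.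
-/

open Set

/-- The three measurement planes. -/
inductive MPlane | XY | XZ | YZ
deriving DecidableEq

/-- The odd neighbourhood of a set `K`: vertices with an odd number of neighbours in `K`. -/
def oddNbhd {V : Type*} (G : SimpleGraph V) (K : Set V) : Set V :=
  {u | Odd (K ∩ G.neighborSet u).ncard}

/-- `(g, prec)` is a gflow for the labelled open graph `(G, I, O, lam)`. -/
structure GFlow {V : Type*} (G : SimpleGraph V) (I O : Set V) (lam : V → MPlane)
    (g : V → Set V) (prec : V → V → Prop) : Prop where
  irrefl : ∀ v, ¬ prec v v
  trans : ∀ u v w, prec u v → prec v w → prec u w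
  noInput : ∀ v, v ∉ O → g v ∩ I = ∅
  g1 : ∀ v, v ∉ O → ∀ w ∈ g v, w ≠ v → prec v w
  g2 : ∀ v, v ∉ O → ∀ w ∈ oddNbhd G (g v), w ≠ v → prec v w
  gXY : ∀ v, v ∉ O → lam v = MPlane.XY → v ∉ g v ∧ v ∈ oddNbhd G (g v)
  gXZ : ∀ v, v ∉ O → lam v = MPlane.XZ → v ∈ g v ∧ v ∈ oddNbhd G (g v)
  gYZ : ∀ v, v ∉ O → lam v = MPlane.YZ → v ∈ g v ∧ v ∉ oddNbhd G (g v)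

/-- Local complementation of `G` about the vertex `u`: complement the edges
among the neighbours of `u`. -/
def localComp {V : Type*} (G : SimpleGraph V) (u : V) : SimpleGraph V where
  Adj x y := x ≠ y ∧ Xor' (G.Adj x y) (G.Adj u x ∧ G.Adj u y)
  symm := by
    constructor
    rintro x y ⟨hxy, h⟩
    refine ⟨hxy.symm, ?_⟩
    rw [G.adj_comm y x, and_comm]
    exact h
  loopless := by constructor; rintro x ⟨h, _⟩; exact h rfl

/-- The pivot of `G` about the edge `u ∼ v`. -/
def pivot {V : Type*} (G : SimpleGraph V) (u v : V) : SimpleGraph V :=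
  localComp (localComp (localComp G u) v) u

open scoped symmDiff

theorem Set.odd_ncard_symmDiff_iff {α : Type*} {A B : Set α} (hA : A.Finite) (hB : B.Finite) :
    Odd (A ∆ B).ncard ↔ Xor (Odd A.ncard) (Odd B.ncard) := by
  have hunion := ncard_union_add_ncard_inter A B hA hB
  have hsymm : (A ∆ B).ncard + (A ∩ B).ncard = (A ∪ B).ncard := by
    rw [symmDiff_eq_sup_sdiff_inf]
    exact ncard_sdiff_add_ncard_of_subset inf_le_sup (hA.union hB)
  simp only [Nat.odd_iff, xor_def]
  omega

theorem Set.odd_ncard_sdiff_singleton_iff {α : Type*} {A : Set α} (hA : A.Finite) (x : α) :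
    Odd (A \ {x}).ncard ↔ Xor (Odd A.ncard) (x ∈ A) := by
  by_cases hx : x ∈ A
  · rw [← ncard_sdiff_singleton_add_one hx hA]
    simp [xor_def, Nat.odd_add_one, hx]
  · simp [sdiff_singleton_eq_self hx, xor_def, hx]

section LocalComplementation

variable {V : Type*} (G : SimpleGraph V) {u x : V}

@[simp]
theorem localComp_adj {y : V} :
    (localComp G u).Adj x y ↔ x ≠ y ∧ Xor (G.Adj x y) (G.Adj u x ∧ G.Adj u y) :=
  Iff.rfl

theorem neighborSet_localComp_of_adj (h : G.Adj u x) :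
    (localComp G u).neighborSet x = G.neighborSet x ∆ (G.neighborSet u \ {x}) := by
  ext y
  by_cases hyx : y = x
  · simp [hyx, mem_symmDiff]
  · simp [xor_def, mem_symmDiff, h, hyx, Ne.symm hyx]

theorem neighborSet_localComp_of_not_adj (h : ¬G.Adj u x) :
    (localComp G u).neighborSet x = G.neighborSet x := by
  ext y
  simpa [xor_def, h] using SimpleGraph.Adj.ne

theorem mem_oddNbhd_localComp_of_adj [Finite V] (S : Set V) (h : G.Adj u x) :
    x ∈ oddNbhd (localComp G u) S ↔ Xor (x ∈ oddNbhd G S) (Xor (u ∈ oddNbhd G S) (x ∈ S)) := by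
  have hxS : x ∈ S ∩ G.neighborSet u ↔ x ∈ S := by simp [h]
  simp only [oddNbhd, mem_ofPred_eq]
  rw [neighborSet_localComp_of_adj G h, inter_symmDiff_distrib_left, ← inter_sdiff_assoc,
    odd_ncard_symmDiff_iff (toFinite _) (toFinite _), odd_ncard_sdiff_singleton_iff (toFinite _),
    hxS]

theorem mem_oddNbhd_localComp_of_not_adj (S : Set V) (h : ¬G.Adj u x) :
    x ∈ oddNbhd (localComp G u) S ↔ x ∈ oddNbhd G S := by
  simp only [oddNbhd, mem_ofPred_eq, neighborSet_localComp_of_not_adj G h]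

end LocalComplementation

theorem oddNbhd_localComp_of_mem_not_odd_general {V : Type*} [Fintype V] (G : SimpleGraph V)
    (u : V) (S : Set V) (hu : u ∉ oddNbhd G S) :
    oddNbhd (localComp G u) S = symmDiff (oddNbhd G S) (G.neighborSet u ∩ S) ∧
      u ∉ oddNbhd (localComp G u) S := by
  have hodd : oddNbhd (localComp G u) S = symmDiff (oddNbhd G S) (G.neighborSet u ∩ S) := by
    ext x
    by_cases hux : G.Adj u x
    · simp [mem_oddNbhd_localComp_of_adj G S hux, mem_symmDiff, xor_def, hu, hux]
    · simp [mem_oddNbhd_localComp_of_not_adj G S hux, mem_symmDiff, hux]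
  refine ⟨hodd, ?_⟩
  simp [hodd, mem_symmDiff, hu]

/-- For `u ∈ S` with `u ∉ Odd_G(S)` (the YZ case of the local-complementation
lemma): `Odd_{G⋆u}(S) = Odd_G(S) Δ (N_G(u) ∩ S)`, and consequently
`u ∉ Odd_{G⋆u}(S)`. -/
theorem oddNbhd_localComp_of_mem_not_odd {V : Type*} [Fintype V] (G : SimpleGraph V)
    (u : V) (S : Set V) (huS : u ∈ S) (hu : u ∉ oddNbhd G S) :
    oddNbhd (localComp G u) S = symmDiff (oddNbhd G S) (G.neighborSet u ∩ S) ∧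
      u ∉ oddNbhd (localComp G u) S :=
  oddNbhd_localComp_of_mem_not_odd_general G u S hu
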